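/- arXiv:2407.04492 — 5 statements merged into one kernel-verified Lean document; each statement's English description precedes it below -/
import Mathlib

section
/- For positive integers s₁ ≤ s₂ ≤ m with s₁ + s₂ ≤ m, the function f(x) = C(x, s₁) · C(m - x, s₂) (binomial coefficients, defined to be 0 when the top is smaller than the bottom) is non-decreasing for integer x in the interval {0, ..., ⌊s₁(m+1)/(s₁+s₂)⌋} and non-increasing for x in {⌊s₁(m+1)/(s₁+s₂)⌋, ..., m}. -/
private lemma key_id (s₁ s₂ m x : ℕ) (hx : x < m) :
    (Nat.choose x s₁ * Nat.choose (m - x) s₂) * ((x + 1) * (m - x - s₂)) =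
    (Nat.choose (x + 1) s₁ * Nat.choose (m - (x + 1)) s₂) * ((x + 1 - s₁) * (m - x)) := by
  have h1 : Nat.choose x s₁ * (x + 1) = Nat.choose (x + 1) s₁ * (x + 1 - s₁) :=
    Nat.choose_mul_succ_eq x s₁
  have e1 : m - x - 1 + 1 = m - x := by omega
  have h2 : Nat.choose (m - x - 1) s₂ * (m - x) = Nat.choose (m - x) s₂ * (m - x - s₂) := by
    have := Nat.choose_mul_succ_eq (m - x - 1) s₂
    rwa [e1] at this
  have e3 : m - (x + 1) = m - x - 1 := by omega
  rw [e3]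
  calc (Nat.choose x s₁ * Nat.choose (m - x) s₂) * ((x + 1) * (m - x - s₂))
      = (Nat.choose x s₁ * (x + 1)) * (Nat.choose (m - x) s₂ * (m - x - s₂)) := by ring
    _ = (Nat.choose (x + 1) s₁ * (x + 1 - s₁)) * (Nat.choose (m - x - 1) s₂ * (m - x)) := by
        rw [h1, ← h2]
    _ = (Nat.choose (x + 1) s₁ * Nat.choose (m - x - 1) s₂) * ((x + 1 - s₁) * (m - x)) := by ring

private lemma inc_step (s₁ s₂ m x : ℕ) (hs₁ : 0 < s₁) (h12 : s₁ ≤ s₂)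
    (h : (x + 1) * (s₁ + s₂) ≤ s₁ * (m + 1)) :
    Nat.choose x s₁ * Nat.choose (m - x) s₂ ≤
      Nat.choose (x + 1) s₁ * Nat.choose (m - (x + 1)) s₂ := by
  by_cases hxs : x < s₁
  · simp [Nat.choose_eq_zero_of_lt hxs]
  push_neg at hxs
  obtain ⟨a, rfl⟩ : ∃ a, x = s₁ + a := ⟨x - s₁, by omega⟩
  have hxm : s₁ + a < m := by nlinarith
  have hds : s₂ + (s₁ + a) < m := by nlinarith
  obtain ⟨e, he⟩ : ∃ e, m - (s₁ + a) = s₂ + e + 1 := ⟨m - (s₁ + a) - s₂ - 1, by omega⟩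
  have hm : m = s₁ + a + s₂ + e + 1 := by omega
  have eA : m - (s₁ + a) - s₂ = e + 1 := by omega
  have eB : s₁ + a + 1 - s₁ = a + 1 := by omega
  have eD : m - (s₁ + a + 1) = s₂ + e := by omega
  have hkey := key_id s₁ s₂ m (s₁ + a) hxm
  rw [eA, eB, eD, he] at hkey
  rw [eD, he]
  have hBA : (a + 1) * (s₂ + e + 1) ≤ (s₁ + a + 1) * (e + 1) := by nlinarith [hm]
  refine Nat.le_of_mul_le_mul_right ?_
    (show 0 < (s₁ + a + 1) * (e + 1) by positivity)
  rw [hkey]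
  exact Nat.mul_le_mul_left _ hBA

private lemma dec_step (s₁ s₂ m x : ℕ) (hs₁ : 0 < s₁) (h12 : s₁ ≤ s₂) (hxm : x < m)
    (h : s₁ * (m + 1) < (x + 1) * (s₁ + s₂)) :
    Nat.choose (x + 1) s₁ * Nat.choose (m - (x + 1)) s₂ ≤
      Nat.choose x s₁ * Nat.choose (m - x) s₂ := by
  by_cases hms : m - x ≤ s₂
  · have : m - (x + 1) < s₂ := by omega
    simp [Nat.choose_eq_zero_of_lt this]
  push_neg at hms
  obtain ⟨e, he⟩ : ∃ e, m - x = s₂ + e + 1 := ⟨m - x - s₂ - 1, by omega⟩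
  have hm : m = x + s₂ + e + 1 := by omega
  have hxs : s₁ ≤ x := by nlinarith [hm]
  obtain ⟨a, rfl⟩ : ∃ a, x = s₁ + a := ⟨x - s₁, by omega⟩
  have eA : m - (s₁ + a) - s₂ = e + 1 := by omega
  have eB : s₁ + a + 1 - s₁ = a + 1 := by omega
  have eD : m - (s₁ + a + 1) = s₂ + e := by omega
  have hkey := key_id s₁ s₂ m (s₁ + a) hxm
  rw [eA, eB, eD, he] at hkey
  rw [eD, he]
  have hBA : (s₁ + a + 1) * (e + 1) ≤ (a + 1) * (s₂ + e + 1) := by nlinarith [hm]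
  refine Nat.le_of_mul_le_mul_right ?_
    (show 0 < (a + 1) * (s₂ + e + 1) by positivity)
  rw [← hkey]
  exact Nat.mul_le_mul_left _ hBA

theorem stmt_0 (s₁ s₂ m : ℕ) (hs₁ : 0 < s₁) (h12 : s₁ ≤ s₂) (h2m : s₂ ≤ m)
    (hsum : s₁ + s₂ ≤ m) :
    (∀ x y : ℕ, x ≤ y → y ≤ s₁ * (m + 1) / (s₁ + s₂) →
      Nat.choose x s₁ * Nat.choose (m - x) s₂ ≤ Nat.choose y s₁ * Nat.choose (m - y) s₂) ∧
    (∀ x y : ℕ, s₁ * (m + 1) / (s₁ + s₂) ≤ x → x ≤ y → y ≤ m →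
      Nat.choose y s₁ * Nat.choose (m - y) s₂ ≤ Nat.choose x s₁ * Nat.choose (m - x) s₂) := by
  have hpos : 0 < s₁ + s₂ := by omega
  constructor
  · intro x y hxy hyt
    induction y with
    | zero =>
      have : x = 0 := by omega
      subst this; rfl
    | succ n ih =>
      rcases Nat.eq_or_lt_of_le hxy with rfl | hlt
      · rfl
      have hstep : (n + 1) * (s₁ + s₂) ≤ s₁ * (m + 1) :=
        (Nat.le_div_iff_mul_le hpos).mp hyt
      exact le_trans (ih (by omega) (by omega)) (inc_step s₁ s₂ m n hs₁ h12 hstep)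
  · intro x y htx hxy hym
    induction y with
    | zero =>
      have : x = 0 := by omega
      subst this; rfl
    | succ n ih =>
      rcases Nat.eq_or_lt_of_le hxy with rfl | hlt
      · rfl
      have htn : s₁ * (m + 1) / (s₁ + s₂) ≤ n := by omega
      have hstep : s₁ * (m + 1) < (n + 1) * (s₁ + s₂) :=
        (Nat.div_lt_iff_lt_mul hpos).mp (lt_of_le_of_lt htn (Nat.lt_succ_self n))
      exact le_trans (dec_step s₁ s₂ m n hs₁ h12 (by omega) hstep) (ih (by omega) (by omega))
end

section
/- Let d be a positive real, s a positive integer with s ≤ d, and ε a real number with 8/d < ε < 1/2. Then C((1+ε)d, s) ≤ e^{8√ε · s} · C(d, s), where C(t,s) denotes the generalized binomial coefficient. -/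
/-- Generalized binomial coefficient `C(t, s) = t(t-1)⋯(t-s+1)/s!` for `t ≥ s`, `0` otherwise. -/
noncomputable def genBinom (t : ℝ) (s : ℕ) : ℝ :=
  if (s : ℝ) ≤ t then (∏ i ∈ Finset.range s, (t - i)) / (Nat.factorial s) else 0

lemma one_add_le_exp_two_sqrt {x : ℝ} (hx : 0 ≤ x) :
    1 + x ≤ Real.exp (2 * Real.sqrt x) := by
  rw [two_mul, Real.exp_add]
  nlinarith [Real.add_one_le_exp (Real.sqrt x), Real.sq_sqrt hx, Real.sqrt_nonneg x]

theorem stmt_4 (d ε : ℝ) (s : ℕ) (hd : 0 < d) (hs : 0 < s) (hsd : (s : ℝ) ≤ d)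
    (hε₁ : 8 / d < ε) (hε₂ : ε < 1 / 2) :
    genBinom ((1 + ε) * d) s ≤ Real.exp (8 * Real.sqrt ε * s) * genBinom d s := by
  have hε0 : 0 < ε := lt_trans (by positivity) hε₁
  have hsε : 0 ≤ Real.sqrt ε := Real.sqrt_nonneg _
  have h1 : (s : ℝ) ≤ (1 + ε) * d := le_trans hsd (by nlinarith)
  -- positivity of d - i for i < s
  have hpos : ∀ i ∈ Finset.range s, (0:ℝ) < d - i := by
    intro i hi
    rw [Finset.mem_range] at hi
    have : (i : ℝ) + 1 ≤ s := by exact_mod_cast Nat.succ_le_of_lt hi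
    linarith
  have hpos' : ∀ i ∈ Finset.range s, (0:ℝ) ≤ d - (i+1) := by
    intro i hi
    rw [Finset.mem_range] at hi
    have : (i : ℝ) + 1 ≤ s := by exact_mod_cast Nat.succ_le_of_lt hi
    linarith
  -- key product inequality
  have key : ∏ i ∈ Finset.range s, ((1 + ε) * d - i)
      ≤ Real.exp (8 * Real.sqrt ε * s) * ∏ i ∈ Finset.range s, (d - i) := by
    have step1 : ∏ i ∈ Finset.range s, ((1 + ε) * d - i)
        ≤ ∏ i ∈ Finset.range s,
            (Real.exp (2 * Real.sqrt ε * Real.sqrt d / Real.sqrt (d - i)) * (d - i)) := by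
      apply Finset.prod_le_prod
      · intro i hi
        have := hpos i hi
        nlinarith
      · intro i hi
        have hdi := hpos i hi
        have hx : (0:ℝ) ≤ ε * d / (d - i) := by positivity
        have heq : (1 + ε) * d - i = (d - i) * (1 + ε * d / (d - i)) := by
          field_simp; ring
        have hsq : Real.sqrt (ε * d / (d - i))
            = Real.sqrt ε * Real.sqrt d / Real.sqrt (d - i) := by
          rw [Real.sqrt_div (by positivity : (0:ℝ) ≤ ε * d), Real.sqrt_mul hε0.le]
        calc (1 + ε) * d - i = (d - i) * (1 + ε * d / (d - i)) := heq
          _ ≤ (d - i) * Real.exp (2 * Real.sqrt (ε * d / (d - i))) := by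
              apply mul_le_mul_of_nonneg_left (one_add_le_exp_two_sqrt hx) (le_of_lt hdi)
          _ = Real.exp (2 * Real.sqrt ε * Real.sqrt d / Real.sqrt (d - i)) * (d - i) := by
              rw [hsq]; ring_nf
    have step2 : ∏ i ∈ Finset.range s,
            (Real.exp (2 * Real.sqrt ε * Real.sqrt d / Real.sqrt (d - i)) * (d - i))
        = Real.exp (∑ i ∈ Finset.range s, 2 * Real.sqrt ε * Real.sqrt d / Real.sqrt (d - i))
          * ∏ i ∈ Finset.range s, (d - i) := by
      rw [Finset.prod_mul_distrib, Real.exp_sum]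
    -- bound the sum of exponents
    have hsum : ∑ i ∈ Finset.range s, 2 * Real.sqrt ε * Real.sqrt d / Real.sqrt (d - i)
        ≤ 8 * Real.sqrt ε * s := by
      have htel : ∑ i ∈ Finset.range s,
          (Real.sqrt (d - i) - Real.sqrt (d - (i+1))) = Real.sqrt d - Real.sqrt (d - s) := by
        have := Finset.sum_range_sub' (fun i => Real.sqrt (d - i)) s
        simpa using this
      have hterm : ∀ i ∈ Finset.range s,
          1 / Real.sqrt (d - i) ≤ 2 * (Real.sqrt (d - i) - Real.sqrt (d - (i+1))) := by
        intro i hi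
        have ha := hpos i hi
        have hb := hpos' i hi
        have hsa : Real.sqrt (d - i) * Real.sqrt (d - i) = d - i := Real.mul_self_sqrt ha.le
        have hsb : Real.sqrt (d - (i+1)) * Real.sqrt (d - (i+1)) = d - (i+1) :=
          Real.mul_self_sqrt hb
        have hsapos : 0 < Real.sqrt (d - i) := Real.sqrt_pos.mpr ha
        have hsbnn : 0 ≤ Real.sqrt (d - (i+1)) := Real.sqrt_nonneg _
        rw [div_le_iff₀ hsapos]
        nlinarith [sq_nonneg (Real.sqrt (d - i) - Real.sqrt (d - (i+1)))]
      have hsum1 : ∑ i ∈ Finset.range s, 1 / Real.sqrt (d - i)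
          ≤ 2 * (Real.sqrt d - Real.sqrt (d - s)) := by
        calc ∑ i ∈ Finset.range s, 1 / Real.sqrt (d - i)
            ≤ ∑ i ∈ Finset.range s, 2 * (Real.sqrt (d - i) - Real.sqrt (d - (i+1))) :=
              Finset.sum_le_sum hterm
          _ = 2 * (Real.sqrt d - Real.sqrt (d - s)) := by
              rw [← Finset.mul_sum, htel]
      have hfin : Real.sqrt d * (Real.sqrt d - Real.sqrt (d - s)) ≤ 2 * s := by
        have h1 : Real.sqrt d * Real.sqrt d = d := Real.mul_self_sqrt hd.le
        have h2 : d - s ≤ Real.sqrt d * Real.sqrt (d - s) := by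
          have : Real.sqrt (d - s) * Real.sqrt (d - s) = d - s :=
            Real.mul_self_sqrt (by linarith)
          nlinarith [Real.sqrt_le_sqrt (show d - (s:ℝ) ≤ d by have : (0:ℝ) ≤ s := Nat.cast_nonneg s; linarith),
            Real.sqrt_nonneg (d - s)]
        nlinarith [show (1:ℝ) ≤ s from by exact_mod_cast hs]
      calc ∑ i ∈ Finset.range s, 2 * Real.sqrt ε * Real.sqrt d / Real.sqrt (d - i)
          = 2 * Real.sqrt ε * Real.sqrt d * ∑ i ∈ Finset.range s, 1 / Real.sqrt (d - i) := by
            rw [Finset.mul_sum]; apply Finset.sum_congr rfl; intro i hi; ring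
        _ ≤ 2 * Real.sqrt ε * Real.sqrt d * (2 * (Real.sqrt d - Real.sqrt (d - s))) := by
            apply mul_le_mul_of_nonneg_left hsum1 (by positivity)
        _ = 4 * Real.sqrt ε * (Real.sqrt d * (Real.sqrt d - Real.sqrt (d - s))) := by ring
        _ ≤ 4 * Real.sqrt ε * (2 * s) :=
            mul_le_mul_of_nonneg_left hfin (by positivity)
        _ = 8 * Real.sqrt ε * s := by ring
    calc ∏ i ∈ Finset.range s, ((1 + ε) * d - i)
        ≤ Real.exp (∑ i ∈ Finset.range s, 2 * Real.sqrt ε * Real.sqrt d / Real.sqrt (d - i))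
          * ∏ i ∈ Finset.range s, (d - i) := step1.trans_eq step2
      _ ≤ Real.exp (8 * Real.sqrt ε * s) * ∏ i ∈ Finset.range s, (d - i) := by
          apply mul_le_mul_of_nonneg_right (Real.exp_le_exp.mpr hsum)
          exact Finset.prod_nonneg fun i hi => (hpos i hi).le
  rw [genBinom, genBinom, if_pos h1, if_pos hsd, ← mul_div_assoc]
  have hfac : (0:ℝ) < (Nat.factorial s : ℝ) := by positivity
  exact div_le_div_of_nonneg_right key hfac.le |>.trans_eq rfl
end

section
/- Let δ, Γ, t be positive reals and s a positive integer such that Γ ≥ 2⁵, s ≤ 3t/4, and s ≤ 2^{Γδs}. Then the sum over integers i from ⌈Γδs⌉ to s of C(t, s-i)·C(δt, i) is at most 2^{-Γδs} · C(t, s), where C denotes the generalized binomial coefficient for real upper argument. -/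
lemma genBinom_nonneg (x : ℝ) (n : ℕ) : 0 ≤ genBinom x n := by
  unfold genBinom
  split_ifs with h
  · apply div_nonneg _ (by positivity)
    apply Finset.prod_nonneg
    intro i hi
    have hi' : (i : ℝ) + 1 ≤ n := by exact_mod_cast Finset.mem_range.mp hi
    linarith
  · exact le_rfl

lemma genBinom_le_pow (x : ℝ) (n : ℕ) (hx : 0 ≤ x) :
    genBinom x n ≤ x ^ n / Nat.factorial n := by
  unfold genBinom
  split_ifs with h
  · have h1 : ∏ i ∈ Finset.range n, (x - i) ≤ x ^ n := by
      calc ∏ i ∈ Finset.range n, (x - (i : ℝ)) ≤ ∏ _i ∈ Finset.range n, x := by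
            apply Finset.prod_le_prod
            · intro i hi
              have hi' : (i : ℝ) + 1 ≤ n := by exact_mod_cast Finset.mem_range.mp hi
              linarith
            · intro i hi
              have : (0:ℝ) ≤ i := by positivity
              linarith
        _ = x ^ n := by rw [Finset.prod_const, Finset.card_range]
    apply div_le_div_of_nonneg_right h1 ?_ |>.trans_eq rfl
    positivity
  · positivity

lemma fact_le_aux (s : ℕ) : ∀ i ≤ s, Nat.factorial s ≤ Nat.factorial (s - i) * s ^ i := by
  intro i
  induction i with
  | zero => simp
  | succ k ih =>
    intro hk
    have hk' : k ≤ s := by omega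
    have h1 := ih hk'
    have h2 : Nat.factorial (s - k) ≤ s * Nat.factorial (s - (k + 1)) := by
      have he : s - k = (s - (k + 1)) + 1 := by omega
      rw [he, Nat.factorial_succ]
      exact Nat.mul_le_mul_right _ (by omega)
    calc Nat.factorial s ≤ Nat.factorial (s - k) * s ^ k := h1
      _ ≤ (s * Nat.factorial (s - (k + 1))) * s ^ k := Nat.mul_le_mul_right _ h2
      _ = Nat.factorial (s - (k + 1)) * s ^ (k + 1) := by ring

lemma fact_ge_aux (m : ℕ) (hm : 1 ≤ m) :
    ∀ k, Nat.factorial m * m ^ k ≤ Nat.factorial (m + k) := by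
  intro k
  induction k with
  | zero => simp
  | succ n ih =>
    have he : m + (n + 1) = (m + n) + 1 := by omega
    rw [he, Nat.factorial_succ, pow_succ]
    calc Nat.factorial m * (m ^ n * m) = m * (Nat.factorial m * m ^ n) := by ring
      _ ≤ (m + n + 1) * Nat.factorial (m + n) := Nat.mul_le_mul (by omega) ih

lemma pow_le_three_fact : ∀ m : ℕ, (m : ℝ) ^ m ≤ 3 ^ m * Nat.factorial m := by
  intro m
  induction m with
  | zero => simp
  | succ n ih =>
    rcases Nat.eq_zero_or_pos n with h | h
    · subst h; norm_num
    · have hn : (1:ℝ) ≤ n := by exact_mod_cast h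
      have hn0 : (0:ℝ) < n := by linarith
      have key : ((n:ℝ) + 1) ^ n ≤ 3 * (n:ℝ) ^ n := by
        have h1 : (n:ℝ) + 1 = n * (1 + 1/n) := by field_simp
        have h2 : (1 + 1/(n:ℝ)) ≤ Real.exp (1/n) := by
          have := Real.add_one_le_exp (1/(n:ℝ)); linarith
        have h3 : ((1:ℝ) + 1/n) ^ n ≤ Real.exp (1/n) ^ n :=
          pow_le_pow_left₀ (by positivity) h2 n
        have h4 : Real.exp (1/(n:ℝ)) ^ n = Real.exp 1 := by
          rw [← Real.exp_nat_mul]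
          congr 1
          field_simp
        have h5 : Real.exp 1 ≤ 3 := by
          have := Real.exp_one_lt_d9; linarith
        have h6 : ((1:ℝ) + 1/n) ^ n ≤ 3 := by
          calc ((1:ℝ) + 1/n) ^ n ≤ Real.exp (1/n) ^ n := h3
            _ = Real.exp 1 := h4
            _ ≤ 3 := h5
        calc ((n:ℝ) + 1) ^ n = (n:ℝ) ^ n * (1 + 1/n) ^ n := by rw [h1, mul_pow]
          _ ≤ (n:ℝ) ^ n * 3 := mul_le_mul_of_nonneg_left h6 (by positivity)
          _ = 3 * (n:ℝ) ^ n := by ring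
      have hfc : (Nat.factorial (n+1) : ℝ) = ((n:ℝ) + 1) * Nat.factorial n := by
        rw [Nat.factorial_succ]; push_cast; ring
      have hcast : ((n + 1 : ℕ) : ℝ) = (n:ℝ) + 1 := by push_cast; ring
      rw [hcast, hfc]
      calc ((n:ℝ) + 1) ^ (n + 1) = ((n:ℝ) + 1) * ((n:ℝ) + 1) ^ n := by ring
        _ ≤ ((n:ℝ) + 1) * (3 * (n:ℝ) ^ n) := by
            apply mul_le_mul_of_nonneg_left key (by positivity)
        _ ≤ ((n:ℝ) + 1) * (3 * (3 ^ n * Nat.factorial n)) := by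
            apply mul_le_mul_of_nonneg_left _ (by positivity)
            exact mul_le_mul_of_nonneg_left ih (by norm_num)
        _ = 3 ^ (n + 1) * (((n:ℝ) + 1) * Nat.factorial n) := by ring

lemma genBinom_ratio (t : ℝ) (s i : ℕ) (hi : i ≤ s) (ht : 0 < t)
    (hst : (s:ℝ) ≤ 3 * t / 4) :
    genBinom t (s - i) ≤ genBinom t s * (4 * s / t) ^ i := by
  have hts : (s:ℝ) ≤ t := by linarith
  have htsi : ((s - i : ℕ) : ℝ) ≤ t := by
    have : ((s - i : ℕ) : ℝ) ≤ (s : ℝ) := by exact_mod_cast Nat.sub_le s i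
    linarith
  unfold genBinom
  rw [if_pos htsi, if_pos hts]
  have hsplit : ∏ j ∈ Finset.range s, (t - (j:ℝ)) =
      (∏ j ∈ Finset.range (s - i), (t - (j:ℝ))) *
        ∏ j ∈ Finset.range i, (t - (((s - i : ℕ) : ℝ) + j)) := by
    have he : s = (s - i) + i := by omega
    conv_lhs => rw [he]
    rw [Finset.prod_range_add]
    congr 1
    apply Finset.prod_congr rfl
    intro j _
    push_cast
    ring
  set Q : ℝ := ∏ j ∈ Finset.range i, (t - (((s - i : ℕ) : ℝ) + j)) with hQdef
  have hQ : (t / 4) ^ i ≤ Q := by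
    have hc : (t / 4) ^ i = ∏ _j ∈ Finset.range i, (t / 4) := by
      rw [Finset.prod_const, Finset.card_range]
    rw [hc, hQdef]
    apply Finset.prod_le_prod
    · intro j _; positivity
    · intro j hj
      have hj' : j < i := Finset.mem_range.mp hj
      have h1 : ((s - i : ℕ) : ℝ) + (j : ℝ) + 1 ≤ (s : ℝ) := by
        have : (s - i) + j + 1 ≤ s := by omega
        exact_mod_cast this
      linarith
  have hPnn : 0 ≤ ∏ j ∈ Finset.range (s - i), (t - (j:ℝ)) := by
    apply Finset.prod_nonneg
    intro j hj
    have hj' : (j : ℝ) + 1 ≤ ((s - i : ℕ) : ℝ) := by exact_mod_cast Finset.mem_range.mp hj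
    linarith
  have hfact : (Nat.factorial s : ℝ) ≤ (Nat.factorial (s - i) : ℝ) * (s : ℝ) ^ i := by
    exact_mod_cast fact_le_aux s i hi
  rw [div_mul_eq_mul_div, div_le_div_iff₀ (by positivity) (by positivity)]
  have hQ4 : (s : ℝ) ^ i ≤ Q * (4 * s / t) ^ i := by
    have h1 : (t / 4) ^ i * (4 * s / t) ^ i ≤ Q * (4 * s / t) ^ i :=
      mul_le_mul_of_nonneg_right hQ (by positivity)
    have h2 : (t / 4) ^ i * (4 * (s:ℝ) / t) ^ i = (s : ℝ) ^ i := by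
      rw [← mul_pow]
      congr 1
      field_simp
    linarith
  calc (∏ j ∈ Finset.range (s - i), (t - (j:ℝ))) * (Nat.factorial s : ℝ)
      ≤ (∏ j ∈ Finset.range (s - i), (t - (j:ℝ))) *
          ((Nat.factorial (s - i) : ℝ) * (s:ℝ) ^ i) :=
        mul_le_mul_of_nonneg_left hfact hPnn
    _ = ((∏ j ∈ Finset.range (s - i), (t - (j:ℝ))) * (s:ℝ) ^ i) *
          (Nat.factorial (s - i) : ℝ) := by ring
    _ ≤ ((∏ j ∈ Finset.range (s - i), (t - (j:ℝ))) * (Q * (4 * s / t) ^ i)) *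
          (Nat.factorial (s - i) : ℝ) := by
        apply mul_le_mul_of_nonneg_right _ (by positivity)
        exact mul_le_mul_of_nonneg_left hQ4 hPnn
    _ = (∏ j ∈ Finset.range s, (t - (j:ℝ))) * (4 * s / t) ^ i *
          (Nat.factorial (s - i) : ℝ) := by rw [hsplit]; ring

theorem stmt_6 (δ Γ t : ℝ) (s : ℕ) (hδ : 0 < δ) (hΓ : (2 : ℝ) ^ 5 ≤ Γ) (ht : 0 < t)
    (hs : 0 < s) (hst : (s : ℝ) ≤ 3 * t / 4) (hs2 : (s : ℝ) ≤ (2 : ℝ) ^ (Γ * δ * s)) :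
    ∑ i ∈ Finset.Icc ⌈Γ * δ * s⌉₊ s, genBinom t (s - i) * genBinom (δ * t) i ≤
      (2 : ℝ) ^ (-(Γ * δ * s)) * genBinom t s := by
  have hΓ0 : (32:ℝ) ≤ Γ := by norm_num at hΓ; linarith
  have hs0 : (0:ℝ) < s := by exact_mod_cast hs
  set x := Γ * δ * s with hxdef
  have hx0 : 0 < x := by
    have : (0:ℝ) < Γ := by linarith
    positivity
  set m := ⌈x⌉₊ with hmdef
  have hm1 : 1 ≤ m := Nat.ceil_pos.mpr hx0
  have hxm : x ≤ m := Nat.le_ceil x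
  have hRHS0 : 0 ≤ (2:ℝ) ^ (-x) * genBinom t s := by
    apply mul_nonneg _ (genBinom_nonneg t s)
    positivity
  by_cases hms : m ≤ s
  · -- main case
    set y := 4 * δ * (s:ℝ) with hydef
    have hy0 : 0 ≤ y := by positivity
    have hyx : 8 * y ≤ x := by
      rw [hydef, hxdef]
      nlinarith [mul_pos hδ hs0]
    have hym : y ≤ (m:ℝ) / 8 := by linarith
    have hm0 : (0:ℝ) < m := by exact_mod_cast hm1
    -- step 1: termwise bound
    have step1 : ∀ i ∈ Finset.Icc m s,
        genBinom t (s - i) * genBinom (δ * t) i ≤ genBinom t s * (y ^ i / Nat.factorial i) := by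
      intro i hi
      obtain ⟨hmi, his⟩ := Finset.mem_Icc.mp hi
      have h1 := genBinom_ratio t s i his ht hst
      have h2 := genBinom_le_pow (δ * t) i (by positivity)
      have h3 : 0 ≤ genBinom (δ * t) i := genBinom_nonneg _ _
      have h4 : 0 ≤ genBinom t (s - i) := genBinom_nonneg _ _
      calc genBinom t (s - i) * genBinom (δ * t) i
          ≤ (genBinom t s * (4 * s / t) ^ i) * ((δ * t) ^ i / Nat.factorial i) := by
            apply mul_le_mul h1 h2 h3
            have := genBinom_nonneg t s
            positivity
        _ = genBinom t s * (y ^ i / Nat.factorial i) := by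
            rw [hydef]
            have hty : (4 * (s:ℝ) / t) * (δ * t) = 4 * δ * s := by field_simp
            rw [← hty, mul_pow]
            ring
    -- step 2: tail bound
    have step2 : ∀ i ∈ Finset.Icc m s,
        y ^ i / (Nat.factorial i : ℝ) ≤ (y ^ m / Nat.factorial m) * (1/8) ^ (i - m) := by
      intro i hi
      obtain ⟨hmi, his⟩ := Finset.mem_Icc.mp hi
      set k := i - m with hkdef
      have hik : i = m + k := by omega
      have hfge : (Nat.factorial m : ℝ) * (m:ℝ) ^ k ≤ (Nat.factorial i : ℝ) := by
        rw [hik]; exact_mod_cast fact_ge_aux m hm1 k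
      have hnum : y ^ i = y ^ m * y ^ k := by rw [hik, pow_add]
      have h1 : y ^ i / (Nat.factorial i : ℝ) ≤
          (y ^ m * y ^ k) / ((Nat.factorial m : ℝ) * (m:ℝ) ^ k) := by
        rw [hnum]
        apply div_le_div_of_nonneg_left (by positivity) (by positivity) hfge
      have h2 : (y ^ m * y ^ k) / ((Nat.factorial m : ℝ) * (m:ℝ) ^ k) =
          (y ^ m / Nat.factorial m) * (y / m) ^ k := by
        rw [div_pow, div_mul_div_comm]
      have h3 : (y / (m:ℝ)) ^ k ≤ (1/8 : ℝ) ^ k := by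
        apply pow_le_pow_left₀ (by positivity)
        rw [div_le_div_iff₀ hm0 (by norm_num)]
        linarith
      calc y ^ i / (Nat.factorial i : ℝ)
          ≤ (y ^ m / Nat.factorial m) * (y / m) ^ k := by rw [← h2]; exact h1
        _ ≤ (y ^ m / Nat.factorial m) * (1/8) ^ k :=
            mul_le_mul_of_nonneg_left h3 (by positivity)
    -- geometric sum
    have hgeom : ∑ i ∈ Finset.Icc m s, ((1:ℝ)/8) ^ (i - m) ≤ 8/7 := by
      rw [← Finset.Ico_add_one_right_eq_Icc, Finset.sum_Ico_eq_sum_range]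
      have : ∀ i ∈ Finset.range (s + 1 - m), ((1:ℝ)/8) ^ (m + i - m) = ((1:ℝ)/8) ^ i := by
        intro i _; congr 1; omega
      rw [Finset.sum_congr rfl this]
      rw [geom_sum_eq (by norm_num)]
      have hp1 : (0:ℝ) ≤ (1/8:ℝ) ^ (s + 1 - m) := by positivity
      have hp2 : ((1/8:ℝ)) ^ (s + 1 - m) ≤ 1 := pow_le_one₀ (by norm_num) (by norm_num)
      rw [div_le_iff_of_neg (by norm_num)]
      linarith
    -- key bound
    have hkey : (y ^ m / (Nat.factorial m : ℝ)) * (8/7) ≤ (2:ℝ) ^ (-x) := by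
      have hfp : (0:ℝ) < Nat.factorial m := by exact_mod_cast Nat.factorial_pos m
      have h0 : (2:ℝ) ^ (-(m:ℝ)) ≤ (2:ℝ) ^ (-x) :=
        Real.rpow_le_rpow_of_exponent_le (by norm_num) (by linarith)
      have h0' : (2:ℝ) ^ (-(m:ℝ)) = ((2:ℝ) ^ m)⁻¹ := by
        rw [Real.rpow_neg (by norm_num), Real.rpow_natCast]
      have hy8 : y ^ m ≤ ((m:ℝ)/8) ^ m := pow_le_pow_left₀ hy0 hym m
      have h34 : ((3:ℝ)/4) ^ m ≤ 3/4 := by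
        calc ((3:ℝ)/4) ^ m ≤ (3/4:ℝ) ^ 1 := pow_le_pow_of_le_one (by norm_num) (by norm_num) hm1
          _ = 3/4 := pow_one _
      have hmain : y ^ m * (2:ℝ) ^ m ≤ (3/4) * Nat.factorial m := by
        have e1 : ((m:ℝ)/8) ^ m * (2:ℝ) ^ m = ((m:ℝ)/4) ^ m := by
          rw [← mul_pow]; congr 1; ring
        have e2 : ((m:ℝ)/4) ^ m = (m:ℝ) ^ m / 4 ^ m := div_pow _ _ _
        have e3 : (m:ℝ) ^ m / 4 ^ m ≤ 3 ^ m * Nat.factorial m / 4 ^ m := by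
          apply div_le_div_of_nonneg_right (pow_le_three_fact m) (by positivity)
        have e4 : (3:ℝ) ^ m * Nat.factorial m / 4 ^ m = (3/4:ℝ) ^ m * Nat.factorial m := by
          rw [div_pow]; ring
        calc y ^ m * (2:ℝ) ^ m ≤ ((m:ℝ)/8) ^ m * (2:ℝ) ^ m :=
              mul_le_mul_of_nonneg_right hy8 (by positivity)
          _ = ((m:ℝ)/4) ^ m := e1
          _ ≤ (3/4:ℝ) ^ m * Nat.factorial m := by rw [e2]; rw [e4] at e3; exact e3
          _ ≤ (3/4) * Nat.factorial m :=
              mul_le_mul_of_nonneg_right h34 (by positivity)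
      have hstep : (y ^ m / (Nat.factorial m : ℝ)) * (8/7) ≤ ((2:ℝ) ^ m)⁻¹ := by
        rw [div_mul_eq_mul_div, div_le_iff₀ hfp, inv_mul_eq_div,
          le_div_iff₀ (by positivity : (0:ℝ) < (2:ℝ) ^ m)]
        nlinarith [pow_nonneg hy0 m, pow_pos (by norm_num : (0:ℝ) < 2) m]
      calc (y ^ m / (Nat.factorial m : ℝ)) * (8/7) ≤ ((2:ℝ) ^ m)⁻¹ := hstep
        _ = (2:ℝ) ^ (-(m:ℝ)) := h0'.symm
        _ ≤ (2:ℝ) ^ (-x) := h0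
    calc ∑ i ∈ Finset.Icc m s, genBinom t (s - i) * genBinom (δ * t) i
        ≤ ∑ i ∈ Finset.Icc m s, genBinom t s * (y ^ i / Nat.factorial i) :=
          Finset.sum_le_sum step1
      _ = genBinom t s * ∑ i ∈ Finset.Icc m s, (y ^ i / Nat.factorial i) :=
          (Finset.mul_sum _ _ _).symm
      _ ≤ genBinom t s * ((y ^ m / Nat.factorial m) * (8/7)) := by
          apply mul_le_mul_of_nonneg_left _ (genBinom_nonneg t s)
          calc ∑ i ∈ Finset.Icc m s, (y ^ i / (Nat.factorial i : ℝ))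
              ≤ ∑ i ∈ Finset.Icc m s, (y ^ m / Nat.factorial m) * (1/8) ^ (i - m) :=
                Finset.sum_le_sum step2
            _ = (y ^ m / Nat.factorial m) * ∑ i ∈ Finset.Icc m s, ((1:ℝ)/8) ^ (i - m) :=
                (Finset.mul_sum _ _ _).symm
            _ ≤ (y ^ m / Nat.factorial m) * (8/7) := by
                apply mul_le_mul_of_nonneg_left hgeom (by positivity)
      _ ≤ genBinom t s * (2:ℝ) ^ (-x) :=
          mul_le_mul_of_nonneg_left hkey (genBinom_nonneg t s)
      _ = (2:ℝ) ^ (-x) * genBinom t s := mul_comm _ _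
  · rw [Finset.Icc_eq_empty (by omega)]
    simpa using hRHS0
end

section
/- Let x, y be positive reals and s a positive integer with x ≥ s. Then C(x + y, s) ≤ (e(x+y+1)/y)^{y+2} · C(x, s), where C denotes the generalized binomial coefficient for real upper argument. -/
theorem stmt_7 (x y : ℝ) (s : ℕ) (hx : 0 < x) (hy : 0 < y) (hs : 0 < s)
    (hsx : (s : ℝ) ≤ x) :
    genBinom (x + y) s ≤
      (Real.exp 1 * (x + y + 1) / y) ^ (y + 2) * genBinom x s := by
  set m : ℕ := ⌈y⌉₊ with hmdef
  have hym : y ≤ (m : ℝ) := Nat.le_ceil y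
  have hmy1 : (m : ℝ) ≤ y + 1 := (Nat.ceil_lt_add_one hy.le).le
  have hm0 : (0 : ℝ) < m := lt_of_lt_of_le hy hym
  have hfac : ∀ (t : ℝ), x ≤ t → ∀ i ∈ Finset.range s, (0:ℝ) < t - i := by
    intro t ht i hi
    have : (i : ℝ) < s := by exact_mod_cast Finset.mem_range.mp hi
    linarith
  set Q : ℕ → ℝ := fun j => ∏ i ∈ Finset.range s, (x + j - i) with hQ
  have hQpos : ∀ j, 0 < Q j := by
    intro j
    apply Finset.prod_pos
    intro i hi
    have h1 := hfac x le_rfl i hi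
    have h2 : (0:ℝ) ≤ j := Nat.cast_nonneg j
    linarith
  have hstep : ∀ j : ℕ, Q (j+1) * (x + j + 1 - s) = Q j * (x + j + 1) := by
    intro j
    have h1 := Finset.prod_range_succ (fun i : ℕ => x + j + 1 - i) s
    have h2 := Finset.prod_range_succ' (fun i : ℕ => x + j + 1 - i) s
    simp only [hQ]
    have e1 : (∏ i ∈ Finset.range s, (x + ((j:ℝ)+1) - i)) = ∏ i ∈ Finset.range s, (x + (j:ℝ) + 1 - i) := by
      apply Finset.prod_congr rfl; intro i _; ring
    have e2 : (∏ i ∈ Finset.range s, (x + (j:ℝ) + 1 - ((i:ℝ)+1))) = ∏ i ∈ Finset.range s, (x + (j:ℝ) - i) := by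
      apply Finset.prod_congr rfl; intro i _; ring
    push_cast
    rw [e1, ← h1, h2]
    push_cast
    rw [e2]
    ring
  have hkey : ∀ k : ℕ, Q k ≤ (∏ j ∈ Finset.range k, (x + j + 1) / (j + 1)) * Q 0 := by
    intro k
    induction k with
    | zero => simp
    | succ k ih =>
      have hden : (0:ℝ) < x + k + 1 - s := by
        have : (0:ℝ) ≤ k := Nat.cast_nonneg k
        linarith
      have hQk1 : Q (k+1) = Q k * ((x + k + 1) / (x + k + 1 - s)) := by
        rw [mul_div_assoc', eq_div_iff hden.ne']
        exact hstep k
      have hfrac : (x + (k:ℝ) + 1) / (x + k + 1 - s) ≤ (x + k + 1) / (k + 1) := by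
        apply div_le_div_of_nonneg_left _ (by positivity) _
        · have : (0:ℝ) ≤ k := Nat.cast_nonneg k; linarith
        · linarith
      calc Q (k+1) = Q k * ((x + k + 1) / (x + k + 1 - s)) := hQk1
        _ ≤ Q k * ((x + k + 1) / (k + 1)) :=
            mul_le_mul_of_nonneg_left hfrac (hQpos k).le
        _ ≤ ((∏ j ∈ Finset.range k, (x + j + 1) / (j + 1)) * Q 0) * ((x + k + 1) / (k + 1)) := by
            apply mul_le_mul_of_nonneg_right ih
            have h1 := hfac x le_rfl
            have : (0:ℝ) ≤ k := Nat.cast_nonneg k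
            have : (0:ℝ) < x + k + 1 := by linarith
            positivity
        _ = (∏ j ∈ Finset.range (k+1), (x + j + 1) / (j + 1)) * Q 0 := by
            rw [Finset.prod_range_succ]; ring
  have hfact : ((Nat.factorial m : ℝ)) = ∏ j ∈ Finset.range m, ((j:ℝ)+1) := by
    rw [← Finset.prod_range_add_one_eq_factorial, Nat.cast_prod]
    push_cast; rfl
  have hprod : (∏ j ∈ Finset.range m, (x + (j:ℝ) + 1) / (j+1)) ≤ (x + m)^m / (Nat.factorial m) := by
    calc (∏ j ∈ Finset.range m, (x + (j:ℝ) + 1) / (j+1))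
        ≤ ∏ j ∈ Finset.range m, (x + m) / ((j:ℝ)+1) := by
          apply Finset.prod_le_prod
          · intro i _
            have : (0:ℝ) ≤ i := Nat.cast_nonneg i
            positivity
          · intro i hi
            have : (i : ℝ) + 1 ≤ m := by exact_mod_cast Finset.mem_range.mp hi
            apply div_le_div_of_nonneg_right _ (by positivity)
            linarith
      _ = (x + m)^m / (Nat.factorial m) := by
          rw [Finset.prod_div_distrib, Finset.prod_const, Finset.card_range, hfact]
  have hfactbd : (x + m)^m / (Nat.factorial m) ≤ (Real.exp 1 * (x + m) / m)^m := by
    have h1 : (m:ℝ)^m / (Nat.factorial m) ≤ Real.exp m :=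
      Real.pow_div_factorial_le_exp (x := (m:ℝ)) (Nat.cast_nonneg m) m
    have hexp : Real.exp (m:ℝ) = Real.exp 1 ^ m := by
      rw [← Real.exp_nat_mul]; norm_num
    have hfpos : (0:ℝ) < Nat.factorial m := by positivity
    have h2 : (m:ℝ)^m ≤ Real.exp 1 ^ m * Nat.factorial m := by
      rw [div_le_iff₀ hfpos, hexp] at h1
      linarith
    rw [div_pow, mul_pow, div_le_div_iff₀ hfpos (by positivity)]
    calc (x+m)^m * (m:ℝ)^m ≤ (x+m)^m * (Real.exp 1 ^ m * Nat.factorial m) := by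
          apply mul_le_mul_of_nonneg_left h2 (by positivity)
      _ = Real.exp 1 ^ m * (x+m)^m * Nat.factorial m := by ring
  set b : ℝ := Real.exp 1 * (x + y + 1) / y with hb
  have hbase : Real.exp 1 * (x + m) / m ≤ b := by
    rw [hb]
    have he := Real.exp_pos 1
    have key : (x + m) * y ≤ (x + y + 1) * (m:ℝ) := by nlinarith
    rw [div_le_div_iff₀ hm0 hy]
    nlinarith [mul_le_mul_of_nonneg_left key he.le]
  have hb1 : 1 ≤ b := by
    rw [hb, le_div_iff₀ hy]
    have he : (2:ℝ) ≤ Real.exp 1 := by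
      have := Real.add_one_le_exp 1
      linarith
    nlinarith
  have hpow : (Real.exp 1 * (x + m) / m)^m ≤ b ^ (y + 2) := by
    calc (Real.exp 1 * (x + m) / m)^m ≤ b^m := by
          apply pow_le_pow_left₀ (by positivity) hbase
      _ = b ^ ((m:ℝ)) := (Real.rpow_natCast b m).symm
      _ ≤ b ^ (y + 2) := by
          apply Real.rpow_le_rpow_of_exponent_le hb1
          linarith
  have hQy : (∏ i ∈ Finset.range s, (x + y - i)) ≤ Q m := by
    apply Finset.prod_le_prod
    · intro i hi
      have := hfac x le_rfl i hi
      linarith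
    · intro i hi; linarith
  have hQ0 : Q 0 = ∏ i ∈ Finset.range s, (x - i) := by
    simp only [hQ]
    apply Finset.prod_congr rfl; intro i _; push_cast; ring
  have hchain : (∏ i ∈ Finset.range s, (x + y - i)) ≤ b ^ (y+2) * Q 0 := by
    calc (∏ i ∈ Finset.range s, (x + y - i)) ≤ Q m := hQy
      _ ≤ (∏ j ∈ Finset.range m, (x + j + 1) / (j + 1)) * Q 0 := hkey m
      _ ≤ ((x + m)^m / (Nat.factorial m)) * Q 0 :=
          mul_le_mul_of_nonneg_right hprod (hQpos 0).le
      _ ≤ (Real.exp 1 * (x + m) / m)^m * Q 0 :=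
          mul_le_mul_of_nonneg_right hfactbd (hQpos 0).le
      _ ≤ b ^ (y+2) * Q 0 := mul_le_mul_of_nonneg_right hpow (hQpos 0).le
  have hxy : (s:ℝ) ≤ x + y := by linarith
  rw [genBinom, genBinom, if_pos hxy, if_pos hsx, ← mul_div_assoc]
  gcongr
  rw [← hQ0]
  exact hchain
end

section
/- Let s₁, s₂, m be positive integers and δ, ε ∈ (0,1) with (1+δ)(s₁+s₂) ≤ m, s₁+s₂ ≥ 2⁵/δ, 2√ε·min{s₁,s₂} ≥ 1, and 2¹⁰·min{s₁²,s₂²}/(m²(s₁+s₂)²) ≤ ε ≤ δ²·min{s₁²,s₂²}/(2¹⁰(s₁+s₂)²). Let D be the set of pairs (t, x) of nonnegative integers with s₁+s₂ ≤ t ≤ (1+2ε)m and s₁m/(s₁+s₂) + 2√ε·m ≤ x ≤ t - s₂. Then for every (t,x) ∈ D, C(x, s₁)·C(t-x, s₂) ≤ e^{-ε(s₁+s₂)} · C(s₁m/(s₁+s₂), s₁)·C(s₂m/(s₁+s₂), s₂), where C denotes the generalized binomial coefficient for real upper argument. -/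
open Real Finset

/-- log τ ≤ (τ - 1/τ)/2 for τ ≥ 1. -/
lemma myLogHalf {τ : ℝ} (h : 1 ≤ τ) : Real.log τ ≤ (τ - 1/τ)/2 := by
  rcases eq_or_lt_of_le h with h'|h'
  · rw [← h']; simp
  · have h0 : (0:ℝ) < τ := by linarith
    have h2 := (Real.self_lt_sinh_iff (x := Real.log τ)).2 (Real.log_pos h')
    rw [Real.sinh_log h0] at h2
    rw [one_div]; linarith

/-- second order upper bound on log ratio -/
lemma myLogRatioUpper {w z : ℝ} (hw : 0 < w) (hzw : w ≤ z) :
    Real.log z - Real.log w ≤ (z-w)/w - (z-w)^2/(2*z*w) := by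
  have hz : 0 < z := lt_of_lt_of_le hw hzw
  have h1 : (1:ℝ) ≤ z/w := (one_le_div hw).2 hzw
  have h2 := myLogHalf h1
  rw [Real.log_div hz.ne' hw.ne'] at h2
  have heq : (z/w - 1/(z/w))/2 = (z-w)/w - (z-w)^2/(2*z*w) := by
    field_simp
    ring
  rw [heq] at h2
  exact h2

/-- log(1-z) ≤ -z - (7/16) z² on [0,1). -/
lemma myLogOneSub {z : ℝ} (h0 : 0 ≤ z) (h1 : z < 1) :
    Real.log (1 - z) ≤ -z - (7/16)*z^2 := by
  have h1z : (0:ℝ) < 1 - z := by linarith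
  set ρ : ℝ := (1-z) ^ ((8:ℕ):ℝ)⁻¹ with hρdef
  have hρ8 : ρ ^ (8:ℕ) = 1 - z := Real.rpow_inv_natCast_pow h1z.le (by norm_num)
  have hρ0 : 0 < ρ := Real.rpow_pos_of_pos h1z _
  have hρn : 0 ≤ ρ := hρ0.le
  have hρ1 : ρ ≤ 1 := by
    apply Real.rpow_le_one h1z.le (by linarith) (by positivity)
  have hlog : Real.log (1-z) = 8 * Real.log ρ := by
    rw [← hρ8, Real.log_pow]; norm_num
  have hb : Real.log ρ ≤ ρ - 1 := Real.log_le_sub_one_of_pos hρ0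
  have hz' : z = 1 - ρ^8 := by rw [hρ8]; ring
  have hfac : -(1-ρ^8) - (7/16)*(1-ρ^8)^2 - 8*(ρ-1) =
      (1-ρ)^3 * (105/16 + 187/16*ρ + 123/8*ρ^2 + 141/8*ρ^3 + 295/16*ρ^4 + 285/16*ρ^5
        + 63/4*ρ^6 + 49/4*ρ^7 + 147/16*ρ^8 + 105/16*ρ^9 + 35/8*ρ^10 + 21/8*ρ^11
        + 21/16*ρ^12 + 7/16*ρ^13) := by ring
  have hg : (0:ℝ) ≤ 105/16 + 187/16*ρ + 123/8*ρ^2 + 141/8*ρ^3 + 295/16*ρ^4 + 285/16*ρ^5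
        + 63/4*ρ^6 + 49/4*ρ^7 + 147/16*ρ^8 + 105/16*ρ^9 + 35/8*ρ^10 + 21/8*ρ^11
        + 21/16*ρ^12 + 7/16*ρ^13 := by
    have := pow_nonneg hρn 2
    have := pow_nonneg hρn 3
    have := pow_nonneg hρn 4
    have := pow_nonneg hρn 5
    have := pow_nonneg hρn 6
    have := pow_nonneg hρn 7
    have := pow_nonneg hρn 8
    have := pow_nonneg hρn 9
    have := pow_nonneg hρn 10
    have := pow_nonneg hρn 11
    have := pow_nonneg hρn 12
    have := pow_nonneg hρn 13
    linarith
  have hcube : (0:ℝ) ≤ (1-ρ)^3 := by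
    have : (0:ℝ) ≤ 1 - ρ := by linarith
    positivity
  have key : 8*(ρ-1) ≤ -z - (7/16)*z^2 := by
    rw [hz']
    nlinarith [mul_nonneg hcube hg, hfac]
  calc Real.log (1-z) = 8 * Real.log ρ := hlog
    _ ≤ 8*(ρ-1) := by linarith
    _ ≤ -z - (7/16)*z^2 := key

lemma mySumInvLe : ∀ (s : ℕ) (a : ℝ), (s:ℝ) < a →
    ∑ i ∈ Finset.range s, 1/(a-(i:ℝ)) ≤ Real.log a - Real.log (a - s) := by
  intro s
  induction s with
  | zero => intro a _; simp
  | succ n ih =>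
    intro a h
    have h' : (n:ℝ) + 1 < a := by push_cast at h; linarith
    have hn : (n:ℝ) < a := by linarith
    have hw : 1 < a - n := by linarith
    have hstep : 1/(a-n) ≤ Real.log (a-n) - Real.log (a-n-1) := by
      have hx : (0:ℝ) < (a-n-1)/(a-n) := div_pos (by linarith) (by linarith)
      have h2 := Real.log_le_sub_one_of_pos hx
      rw [Real.log_div (by linarith) (by linarith)] at h2
      have he : (a-n-1)/(a-n) - 1 = -(1/(a-n)) := by field_simp; ring
      rw [he] at h2
      linarith
    rw [Finset.sum_range_succ]
    have hih := ih a hn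
    have hcast : a - ((n+1 : ℕ):ℝ) = a - n - 1 := by push_cast; ring
    rw [hcast]
    linarith

lemma myLogLeSumInv : ∀ (s : ℕ) (b : ℝ), (s:ℝ) ≤ b →
    Real.log (b+1) - Real.log (b+1-s) ≤ ∑ j ∈ Finset.range s, 1/(b-(j:ℝ)) := by
  intro s
  induction s with
  | zero => intro b _; simp
  | succ n ih =>
    intro b h
    have h' : (n:ℝ) + 1 ≤ b := by push_cast at h; linarith
    have hn : (n:ℝ) ≤ b := by linarith
    have hw : (1:ℝ) ≤ b - n := by linarith
    have hstep : Real.log (b+1-n) - Real.log (b-n) ≤ 1/(b-n) := by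
      have hx : (0:ℝ) < (b+1-n)/(b-n) := div_pos (by linarith) (by linarith)
      have h2 := Real.log_le_sub_one_of_pos hx
      rw [Real.log_div (by linarith) (by linarith)] at h2
      have he : (b+1-n)/(b-n) - 1 = 1/(b-n) := by field_simp; ring
      rw [he] at h2
      exact h2
    rw [Finset.sum_range_succ]
    have hih := ih b hn
    have hcast : b + 1 - ((n+1 : ℕ):ℝ) = b - n := by push_cast; ring
    rw [hcast]
    linarith

lemma myTele : ∀ (s : ℕ) (b : ℝ),
    ∑ j ∈ Finset.range s, (1/(b-(j:ℝ)) - 1/(b-(j:ℝ)+1)) = 1/(b-s+1) - 1/(b+1) := by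
  intro s
  induction s with
  | zero => intro b; simp
  | succ n ih =>
    intro b
    rw [Finset.sum_range_succ, ih]
    have hcast : b - ((n+1 : ℕ):ℝ) + 1 = b - n := by push_cast; ring
    rw [hcast]
    ring
set_option maxHeartbeats 4000000 in
theorem stmt_18 (s₁ s₂ m : ℕ) (δ ε : ℝ)
    (hs₁ : 0 < s₁) (hs₂ : 0 < s₂) (hm : 0 < m)
    (hδ : δ ∈ Set.Ioo (0 : ℝ) 1) (hε : ε ∈ Set.Ioo (0 : ℝ) 1)
    (h1 : (1 + δ) * (s₁ + s₂) ≤ m)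
    (h2 : (2 : ℝ) ^ 5 / δ ≤ (s₁ + s₂ : ℝ))
    (h3 : 1 ≤ 2 * Real.sqrt ε * min (s₁ : ℝ) s₂)
    (h4 : 2 ^ 10 * min ((s₁ : ℝ) ^ 2) ((s₂ : ℝ) ^ 2) / ((m : ℝ) ^ 2 * (s₁ + s₂ : ℝ) ^ 2) ≤ ε)
    (h5 : ε ≤ δ ^ 2 * min ((s₁ : ℝ) ^ 2) ((s₂ : ℝ) ^ 2) / (2 ^ 10 * (s₁ + s₂ : ℝ) ^ 2)) :
    ∀ t x : ℕ, s₁ + s₂ ≤ t → (t : ℝ) ≤ (1 + 2 * ε) * m →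
      (s₁ : ℝ) * m / (s₁ + s₂) + 2 * Real.sqrt ε * m ≤ (x : ℝ) → x + s₂ ≤ t →
      genBinom (x : ℝ) s₁ * genBinom ((t - x : ℕ) : ℝ) s₂ ≤
        Real.exp (-(ε * (s₁ + s₂))) * genBinom ((s₁ : ℝ) * m / (s₁ + s₂)) s₁ *
          genBinom ((s₂ : ℝ) * m / (s₁ + s₂)) s₂ := by
  obtain ⟨hδ0, hδ1⟩ := hδ
  obtain ⟨hε0, hεlt1⟩ := hε
  intro t x ht1 ht2 hx1 hx2
  have hs₁R : (1:ℝ) ≤ (s₁:ℝ) := by exact_mod_cast hs₁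
  have hs₂R : (1:ℝ) ≤ (s₂:ℝ) := by exact_mod_cast hs₂
  have hmR : (1:ℝ) ≤ (m:ℝ) := by exact_mod_cast hm
  have hm0R : (0:ℝ) < (m:ℝ) := by linarith only [hmR]
  set S : ℝ := (s₁:ℝ) + (s₂:ℝ) with hSdef
  have hS0 : 0 < S := by rw [hSdef]; linarith only [hs₁R, hs₂R]
  have hSne : S ≠ 0 := ne_of_gt hS0
  set q : ℝ := Real.sqrt ε with hqdef
  have hq0 : 0 < q := Real.sqrt_pos.mpr hε0
  have hq2 : q^2 = ε := Real.sq_sqrt hε0.le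
  set μ : ℝ := min ((s₁:ℝ)) ((s₂:ℝ)) with hμdef
  have hμ1 : μ ≤ (s₁:ℝ) := min_le_left _ _
  have hμ2 : μ ≤ (s₂:ℝ) := min_le_right _ _
  have hμ0 : (1:ℝ) ≤ μ := le_min hs₁R hs₂R
  have hμS0 : (0:ℝ) < μ := by linarith only [hμ0]
  have hminsq : min ((s₁:ℝ)^2) ((s₂:ℝ)^2) = μ^2 := by
    rcases le_total ((s₁:ℝ)) ((s₂:ℝ)) with h|h
    · rw [hμdef, min_eq_left h, min_eq_left (by nlinarith only [h, hs₁R, hs₂R])]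
    · rw [hμdef, min_eq_right h, min_eq_right (by nlinarith only [h, hs₁R, hs₂R])]
  rw [hminsq] at h4 h5
  clear_value S q μ
  have hm1 : S + δ*S ≤ (m:ℝ) := by linarith only [h1]
  have hmS0 : 0 < (m:ℝ) - S := by
    have hz := mul_pos hδ0 hS0
    linarith only [hz, hm1]
  have hmS : S ≤ (m:ℝ) := by linarith only [hmS0]
  have hδS : 32 ≤ δ*S := by
    have h2' := (div_le_iff₀ hδ0).mp h2
    norm_num at h2'
    linarith only [h2']
  have hε1' : 1 ≤ 4*ε*μ^2 := by
    have hqμ : (0:ℝ) ≤ 2*q*μ := by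
      have := mul_pos hq0 hμS0
      linarith only [this]
    have h := mul_le_mul h3 h3 (by norm_num) hqμ
    have h' : 1 ≤ 4*q^2*μ^2 := by linarith only [h]
    rw [hq2] at h'
    exact h'
  have hε2' : 1024*(ε*S^2) ≤ δ^2*μ^2 := by
    have hpos : (0:ℝ) < 2^10*S^2 := by
      have := pow_pos hS0 2
      linarith only [this]
    have h5' := (le_div_iff₀ hpos).mp h5
    norm_num at h5' ⊢
    linarith only [h5']
  have hδμ0 : 0 < δ*μ := mul_pos hδ0 hμS0
  have hδμ : 22 ≤ δ*μ := by
    have k1 : 256*S^2 ≤ (δ*μ^2)^2 := by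
      have w1 := mul_le_mul_of_nonneg_right hε2' (sq_nonneg μ)
      have w2 := mul_le_mul_of_nonneg_left hε1'
        (by positivity : (0:ℝ) ≤ 256*S^2)
      nlinarith only [w1, w2]
    have hδμ2 : 0 < δ*μ^2 := mul_pos hδ0 (pow_pos hμS0 2)
    have k2 : 16*S ≤ δ*μ^2 := by nlinarith only [k1, hδμ2, hS0]
    have k3 : 512 ≤ (δ*μ)^2 := by
      have w3 := mul_le_mul_of_nonneg_left k2 hδ0.le
      nlinarith only [w3, hδS, hδ0]
    nlinarith only [k3, hδμ0]
  have hμ22 : 22 ≤ μ := by nlinarith only [hδμ, hδ1, hμS0]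
  have h2μ : 2*μ ≤ S := by rw [hSdef]; linarith only [hμ1, hμ2]
  have hε4096 : ε ≤ 1/4096 := by
    have hδ2 : δ^2 ≤ 1 := by nlinarith only [hδ0, hδ1]
    have e1 : δ^2*μ^2 ≤ μ^2 := by nlinarith only [hδ2, sq_nonneg μ]
    have e2 : 4*μ^2 ≤ S^2 := by nlinarith only [h2μ, hμS0, hS0]
    nlinarith only [hε2', e1, e2, pow_pos hS0 2]
  have hq64 : q ≤ 1/64 := by nlinarith only [hq2, hq0, hε4096]
  set a : ℝ := (s₁:ℝ) * (m:ℝ) / S with hadef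
  set b : ℝ := (s₂:ℝ) * (m:ℝ) / S with hbdef
  have haS : a*S = (s₁:ℝ)*m := by rw [hadef]; field_simp
  have hbS : b*S = (s₂:ℝ)*m := by rw [hbdef]; field_simp
  have hab : a + b = (m:ℝ) := by
    rw [hadef, hbdef]; field_simp; rw [hSdef]
  clear_value a b
  have hs₁nn : (0:ℝ) ≤ (s₁:ℝ) := by linarith only [hs₁R]
  have hs₂nn : (0:ℝ) ≤ (s₂:ℝ) := by linarith only [hs₂R]
  have has₁ : (s₁:ℝ) + 22 ≤ a := by
    have h6 : (s₁:ℝ)*(S + δ*S) ≤ (s₁:ℝ)*m := mul_le_mul_of_nonneg_left hm1 hs₁nn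
    have h22 : 22 ≤ δ*(s₁:ℝ) := by nlinarith only [hδμ, hμ1, hδ0]
    have h7 : 22*S ≤ (s₁:ℝ)*(δ*S) := by nlinarith only [h22, hS0]
    have key : ((s₁:ℝ) + 22) * S ≤ a * S := by
      rw [haS]; nlinarith only [h6, h7]
    exact le_of_mul_le_mul_right key hS0
  have hbs₂ : (s₂:ℝ) + 22 ≤ b := by
    have h6 : (s₂:ℝ)*(S + δ*S) ≤ (s₂:ℝ)*m := mul_le_mul_of_nonneg_left hm1 hs₂nn
    have h22 : 22 ≤ δ*(s₂:ℝ) := by nlinarith only [hδμ, hμ2, hδ0]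
    have h7 : 22*S ≤ (s₂:ℝ)*(δ*S) := by nlinarith only [h22, hS0]
    have key : ((s₂:ℝ) + 22) * S ≤ b * S := by
      rw [hbS]; nlinarith only [h6, h7]
    exact le_of_mul_le_mul_right key hS0
  have ha0 : 0 < a := by linarith only [has₁, hs₁R]
  have hb0 : 0 < b := by linarith only [hbs₂, hs₂R]
  -- c, d, u, v
  have hxt : x ≤ t := le_trans (Nat.le_add_right x s₂) hx2
  set c : ℝ := (x:ℝ) with hcdef
  set d : ℝ := ((t - x : ℕ):ℝ) with hddef
  have hdcast : d = (t:ℝ) - (x:ℝ) := by rw [hddef]; push_cast [hxt]; ring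
  have hcd : c + d = (t:ℝ) := by rw [hdcast, hcdef]; ring
  have hds₂ : (s₂:ℝ) ≤ d := by
    have hx2' : (x:ℝ) + (s₂:ℝ) ≤ (t:ℝ) := by exact_mod_cast hx2
    rw [hdcast]; linarith only [hx2']
  clear_value c d
  set u : ℝ := c - a with hudef
  set v : ℝ := b - d with hvdef
  clear_value u v
  have hu2qm : 2*q*(m:ℝ) ≤ u := by rw [hudef]; linarith only [hx1]
  have hqm0 : 0 < q*(m:ℝ) := mul_pos hq0 hm0R
  have hqmS : 32*μ ≤ q*(m:ℝ)*S := by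
    have hpos : (0:ℝ) < (m:ℝ)^2*S^2 := mul_pos (pow_pos hm0R 2) (pow_pos hS0 2)
    have h4' := (div_le_iff₀ hpos).mp h4
    have h4'' : 1024*μ^2 ≤ (q*(m:ℝ)*S)^2 := by
      have e : (q*(m:ℝ)*S)^2 = ε*((m:ℝ)^2*S^2) := by
        rw [show (q*(m:ℝ)*S)^2 = q^2*((m:ℝ)^2*S^2) from by ring, hq2]
      rw [e]; norm_num at h4' ⊢; linarith only [h4']
    nlinarith only [h4'', mul_pos hqm0 hS0, hμS0]
  have hqm4 : 4 ≤ q*(m:ℝ) := by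
    have w := mul_le_mul h3 hqmS (by nlinarith only [hμS0] : (0:ℝ) ≤ 32*μ)
      (by nlinarith only [hq0, hμS0] : (0:ℝ) ≤ 2*q*μ)
    have k1 : 16 ≤ q^2*(m:ℝ)*S := by nlinarith only [w, hμS0]
    have k2 : 16 ≤ (q*(m:ℝ))^2 := by
      have w2 : (0:ℝ) ≤ q^2*(m:ℝ)*((m:ℝ)-S) :=
        mul_nonneg (mul_nonneg (sq_nonneg q) hm0R.le) hmS0.le
      nlinarith only [k1, w2]
    nlinarith only [k2, hqm0]
  have hu8 : 8 ≤ u := by linarith only [hu2qm, hqm4]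
  have hu0 : 0 < u := by linarith only [hu8]
  have hctR : c ≤ (t:ℝ) := by rw [hcdef]; exact_mod_cast hxt
  have hcm : c ≤ (1+2*ε)*(m:ℝ) := le_trans hctR ht2
  have hc2049 : c ≤ (2049/2048)*(m:ℝ) := by
    have w := mul_le_mul_of_nonneg_right hε4096 hm0R.le
    linarith only [hcm, w]
  have hc0 : 0 < c := by rw [hudef] at hu0; linarith only [hu0, ha0]
  have hvge : u - 2*ε*(m:ℝ) ≤ v := by
    rw [hvdef, hudef]; linarith only [hab, hcd, ht2]
  have huv : u - v ≤ 2*ε*(m:ℝ) := by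
    rw [hvdef, hudef]
    have htS : S ≤ (t:ℝ) := by rw [hSdef]; exact_mod_cast ht1
    linarith only [hab, hcd, ht2]
  have hvu : (63/64)*u ≤ v := by
    have w1 : q*(2*q*(m:ℝ)) ≤ q*u := mul_le_mul_of_nonneg_left hu2qm hq0.le
    have w2 : q*(2*q*(m:ℝ)) = 2*ε*(m:ℝ) := by rw [← hq2]; ring
    have w3 : q*u ≤ (1/64)*u := mul_le_mul_of_nonneg_right hq64 hu0.le
    linarith only [hvge, w1, w2 ▸ w1, w3]
  have hv0 : 0 < v := by linarith only [hvu, hu8]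
  have hv7 : 63/8 ≤ v := by linarith only [hvu, hu8]
  have hd0 : 0 < d := by linarith only [hds₂, hs₂R]
  have hdb : d ≤ b := by rw [hvdef] at hv0; linarith only [hv0]
  -- branch conditions
  have hcond1 : ((s₁:ℕ):ℝ) ≤ c := by rw [hudef] at hu8; linarith only [has₁, hu8]
  have hcond3 : ((s₁:ℕ):ℝ) ≤ a := by linarith only [has₁]
  have hcond4 : ((s₂:ℕ):ℝ) ≤ b := by linarith only [hbs₂]
  rw [genBinom, genBinom, genBinom, genBinom,
    if_pos hcond1, if_pos hds₂, if_pos hcond3, if_pos hcond4]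
  have hf₁ : (0:ℝ) < (Nat.factorial s₁ : ℝ) := by exact_mod_cast Nat.factorial_pos s₁
  have hf₂ : (0:ℝ) < (Nat.factorial s₂ : ℝ) := by exact_mod_cast Nat.factorial_pos s₂
  -- positivity of factors
  have hfac_c : ∀ i ∈ Finset.range s₁, (0:ℝ) < c - (i:ℝ) := by
    intro i hi
    have hiR : (i:ℝ) < (s₁:ℝ) := by exact_mod_cast Finset.mem_range.mp hi
    linarith only [hiR, hcond1]
  have hfac_a : ∀ i ∈ Finset.range s₁, (0:ℝ) < a - (i:ℝ) := by
    intro i hi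
    have hiR : (i:ℝ) < (s₁:ℝ) := by exact_mod_cast Finset.mem_range.mp hi
    linarith only [hiR, hcond3]
  have hfac_d : ∀ j ∈ Finset.range s₂, (0:ℝ) < d - (j:ℝ) := by
    intro j hj
    have hjR : (j:ℝ) < (s₂:ℝ) := by exact_mod_cast Finset.mem_range.mp hj
    linarith only [hjR, hds₂]
  have hfac_b : ∀ j ∈ Finset.range s₂, (0:ℝ) < b - (j:ℝ) := by
    intro j hj
    have hjR : (j:ℝ) < (s₂:ℝ) := by exact_mod_cast Finset.mem_range.mp hj
    linarith only [hjR, hcond4]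
  have hPc : 0 < ∏ i ∈ Finset.range s₁, (c - (i:ℝ)) := Finset.prod_pos hfac_c
  have hPa : 0 < ∏ i ∈ Finset.range s₁, (a - (i:ℝ)) := Finset.prod_pos hfac_a
  have hPd : 0 < ∏ j ∈ Finset.range s₂, (d - (j:ℝ)) := Finset.prod_pos hfac_d
  have hPb : 0 < ∏ j ∈ Finset.range s₂, (b - (j:ℝ)) := Finset.prod_pos hfac_b
  have key : (∏ i ∈ Finset.range s₁, (c - (i:ℝ))) * (∏ j ∈ Finset.range s₂, (d - (j:ℝ))) ≤
      Real.exp (-(ε*S)) * ((∏ i ∈ Finset.range s₁, (a - (i:ℝ))) * (∏ j ∈ Finset.range s₂, (b - (j:ℝ)))) := by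
    have hL : 0 < (∏ i ∈ Finset.range s₁, (c - (i:ℝ))) * (∏ j ∈ Finset.range s₂, (d - (j:ℝ))) :=
      mul_pos hPc hPd
    have hR : 0 < Real.exp (-(ε*S)) * ((∏ i ∈ Finset.range s₁, (a - (i:ℝ))) * (∏ j ∈ Finset.range s₂, (b - (j:ℝ)))) :=
      mul_pos (Real.exp_pos _) (mul_pos hPa hPb)
    rw [← Real.exp_log hL, ← Real.exp_log hR]
    apply Real.exp_le_exp.mpr
    rw [Real.log_mul (ne_of_gt hPc) (ne_of_gt hPd),
        Real.log_mul (ne_of_gt (Real.exp_pos _)) (ne_of_gt (mul_pos hPa hPb)),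
        Real.log_exp, Real.log_mul (ne_of_gt hPa) (ne_of_gt hPb),
        Real.log_prod (fun i hi => ne_of_gt (hfac_c i hi)),
        Real.log_prod (fun i hi => ne_of_gt (hfac_a i hi)),
        Real.log_prod (fun j hj => ne_of_gt (hfac_d j hj)),
        Real.log_prod (fun j hj => ne_of_gt (hfac_b j hj))]
    -- the analytic heart
    set L₁ : ℝ := Real.log a - Real.log (a - (s₁:ℝ)) with hL₁def
    set L₂ : ℝ := Real.log (b+1) - Real.log (b+1-(s₂:ℝ)) with hL₂def
    set T : ℝ := 1/(b - (s₂:ℝ) + 1) - 1/(b+1) with hTdef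
    clear_value L₁ L₂ T
    have hsum1 : ∑ i ∈ Finset.range s₁, Real.log (c - (i:ℝ)) ≤
        (∑ i ∈ Finset.range s₁, Real.log (a - (i:ℝ))) + u * (∑ i ∈ Finset.range s₁, 1/(a - (i:ℝ)))
          - (s₁:ℝ)*(u^2/(2*a*c)) := by
      have hterm : ∀ i ∈ Finset.range s₁,
          Real.log (c - (i:ℝ)) ≤ Real.log (a - (i:ℝ)) + (u*(1/(a - (i:ℝ))) - u^2/(2*a*c)) := by
        intro i hi
        have hiR : (i:ℝ) < (s₁:ℝ) := by exact_mod_cast Finset.mem_range.mp hi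
        have hiN : (0:ℝ) ≤ (i:ℝ) := Nat.cast_nonneg i
        have hwpos : 0 < a - (i:ℝ) := by linarith only [hiR, has₁]
        have hwz : a - (i:ℝ) ≤ c - (i:ℝ) := by
          rw [hudef] at hu0; linarith only [hu0]
        have h := myLogRatioUpper hwpos hwz
        have he : (c - (i:ℝ)) - (a - (i:ℝ)) = u := by rw [hudef]; ring
        rw [he] at h
        have hzpos : 0 < c - (i:ℝ) := lt_of_lt_of_le hwpos hwz
        have hiac : (i:ℝ) ≤ c + a := by linarith only [hiR, hcond1, ha0]
        have hden : 2*(c - (i:ℝ))*(a - (i:ℝ)) ≤ 2*a*c := by nlinarith only [hiN, hiac]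
        have hden0 : 0 < 2*(c - (i:ℝ))*(a - (i:ℝ)) := by
          have := mul_pos hzpos hwpos
          linarith only [this]
        have hq' : u^2/(2*a*c) ≤ u^2/(2*(c - (i:ℝ))*(a - (i:ℝ))) :=
          div_le_div_of_nonneg_left (sq_nonneg u) hden0 hden
        have he2 : u/(a - (i:ℝ)) = u*(1/(a - (i:ℝ))) := by ring
        rw [he2] at h
        linarith only [h, hq']
      calc ∑ i ∈ Finset.range s₁, Real.log (c - (i:ℝ))
          ≤ ∑ i ∈ Finset.range s₁, (Real.log (a - (i:ℝ)) + (u*(1/(a - (i:ℝ))) - u^2/(2*a*c))) :=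
            Finset.sum_le_sum hterm
        _ = (∑ i ∈ Finset.range s₁, Real.log (a - (i:ℝ))) + u * (∑ i ∈ Finset.range s₁, 1/(a - (i:ℝ)))
              - (s₁:ℝ)*(u^2/(2*a*c)) := by
            rw [Finset.sum_add_distrib, Finset.sum_sub_distrib, ← Finset.mul_sum,
              Finset.sum_const, Finset.card_range, nsmul_eq_mul]
            ring
    have hsumInv1 : ∑ i ∈ Finset.range s₁, 1/(a - (i:ℝ)) ≤ L₁ := by
      rw [hL₁def]
      exact mySumInvLe s₁ a (by linarith only [has₁])
    have hsum2 : ∑ j ∈ Finset.range s₂, Real.log (d - (j:ℝ)) ≤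
        (∑ j ∈ Finset.range s₂, Real.log (b - (j:ℝ))) - v * (∑ j ∈ Finset.range s₂, 1/(b - (j:ℝ)))
          - (7/16)*v^2*T := by
      have hterm : ∀ j ∈ Finset.range s₂,
          Real.log (d - (j:ℝ)) ≤ Real.log (b - (j:ℝ)) +
            ((-v)*(1/(b - (j:ℝ))) + (-((7/16)*v^2))*(1/(b - (j:ℝ)) - 1/(b - (j:ℝ)+1))) := by
        intro j hj
        have hjR : (j:ℝ) < (s₂:ℝ) := by exact_mod_cast Finset.mem_range.mp hj
        have hw : 0 < d - (j:ℝ) := by linarith only [hjR, hds₂]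
        have hW : 0 < b - (j:ℝ) := by linarith only [hjR, hcond4]
        have hW1 : 0 < b - (j:ℝ) + 1 := by linarith only [hW]
        have hvW : v < b - (j:ℝ) := by rw [hvdef]; linarith only [hw]
        have hz0 : 0 ≤ v/(b - (j:ℝ)) := div_nonneg hv0.le hW.le
        have hz1 : v/(b - (j:ℝ)) < 1 := (div_lt_one hW).mpr hvW
        have h := myLogOneSub hz0 hz1
        have he : 1 - v/(b - (j:ℝ)) = (d - (j:ℝ))/(b - (j:ℝ)) := by
          rw [hvdef]; field_simp; ring
        rw [he, Real.log_div (ne_of_gt hw) (ne_of_gt hW)] at h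
        have he2 : (v/(b - (j:ℝ)))^2 = v^2*(1/(b - (j:ℝ))^2) := by
          rw [div_pow, mul_one_div]
        rw [he2] at h
        have hstep : 1/(b - (j:ℝ)) - 1/(b - (j:ℝ)+1) ≤ 1/(b - (j:ℝ))^2 := by
          have he3 : 1/(b - (j:ℝ)) - 1/(b - (j:ℝ)+1) = 1/((b - (j:ℝ))*(b - (j:ℝ)+1)) := by
            field_simp; ring
          rw [he3]
          apply one_div_le_one_div_of_le (pow_pos hW 2)
          nlinarith only [hW]
        have hmul := mul_le_mul_of_nonneg_left hstep
          (by positivity : (0:ℝ) ≤ (7/16)*v^2)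
        have he4 : v/(b - (j:ℝ)) = v*(1/(b - (j:ℝ))) := by ring
        rw [he4] at h
        linarith only [h, hmul]
      calc ∑ j ∈ Finset.range s₂, Real.log (d - (j:ℝ))
          ≤ ∑ j ∈ Finset.range s₂, (Real.log (b - (j:ℝ)) +
              ((-v)*(1/(b - (j:ℝ))) + (-((7/16)*v^2))*(1/(b - (j:ℝ)) - 1/(b - (j:ℝ)+1)))) :=
            Finset.sum_le_sum hterm
        _ = (∑ j ∈ Finset.range s₂, Real.log (b - (j:ℝ))) - v * (∑ j ∈ Finset.range s₂, 1/(b - (j:ℝ)))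
              - (7/16)*v^2*T := by
            rw [Finset.sum_add_distrib, Finset.sum_add_distrib, ← Finset.mul_sum, ← Finset.mul_sum,
              myTele s₂ b, ← hTdef]
            ring
    have hsumInv2 : L₂ ≤ ∑ j ∈ Finset.range s₂, 1/(b - (j:ℝ)) := by
      rw [hL₂def]
      exact myLogLeSumInv s₂ b (by linarith only [hbs₂])
    -- core numeric inequality
    have hbs2pos : (0:ℝ) < b - (s₂:ℝ) := by linarith only [hbs₂]
    have hb1pos : (0:ℝ) < b + 1 := by linarith only [hb0]
    have hb1s2pos : (0:ℝ) < b + 1 - (s₂:ℝ) := by linarith only [hbs2pos]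
    have has1pos : (0:ℝ) < a - (s₁:ℝ) := by linarith only [has₁]
    have hbs21pos : (0:ℝ) < b - (s₂:ℝ) + 1 := by linarith only [hbs2pos]
    have hT' : T = (s₂:ℝ)/((b+1)*(b+1-(s₂:ℝ))) := by
      rw [hTdef]
      rw [div_sub_div _ _ (ne_of_gt hbs21pos) (ne_of_gt hb1pos)]
      rw [show (1:ℝ)*(b+1) - (b - (s₂:ℝ) + 1)*1 = (s₂:ℝ) from by ring]
      rw [show (b - (s₂:ℝ) + 1)*(b+1) = (b+1)*(b+1-(s₂:ℝ)) from by ring]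
    have hL₁0 : 0 ≤ L₁ := by
      rw [hL₁def, sub_nonneg]
      exact Real.log_le_log has1pos (by linarith only [hs₁R])
    have hR1 : (1:ℝ) ≤ (m:ℝ)/((m:ℝ)-S) := by
      rw [le_div_iff₀ hmS0]; linarith only [hS0]
    have hRpos : (0:ℝ) < (m:ℝ)/((m:ℝ)-S) := div_pos hm0R hmS0
    have hL₁up : 2*ε*(m:ℝ)*L₁ ≤ ε*S + ε*S*((m:ℝ)/((m:ℝ)-S)) := by
      have hτm : a/(a-(s₁:ℝ)) = (m:ℝ)/((m:ℝ)-S) := by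
        rw [div_eq_div_iff (ne_of_gt has1pos) (ne_of_gt hmS0)]
        linear_combination (-1)*haS
      have hτ1 : (1:ℝ) ≤ a/(a-(s₁:ℝ)) := (one_le_div has1pos).mpr (by linarith only [hs₁R])
      have hlh := myLogHalf hτ1
      have hL₁τ : L₁ = Real.log (a/(a-(s₁:ℝ))) := by
        rw [hL₁def, Real.log_div (ne_of_gt ha0) (ne_of_gt has1pos)]
      rw [hτm] at hlh hL₁τ
      have h1τ : 1/((m:ℝ)/((m:ℝ)-S)) = ((m:ℝ)-S)/(m:ℝ) := one_div_div _ _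
      rw [h1τ] at hlh
      have hεm : (0:ℝ) ≤ 2*ε*(m:ℝ) := by
        have := mul_pos hε0 hm0R
        linarith only [this]
      have hmm := mul_le_mul_of_nonneg_left (hL₁τ ▸ hlh) hεm
      have hE : 2*ε*(m:ℝ)*(((m:ℝ)/((m:ℝ)-S) - ((m:ℝ)-S)/(m:ℝ))/2) = ε*S + ε*S*((m:ℝ)/((m:ℝ)-S)) := by
        field_simp
        ring
      linarith only [hmm, hE ▸ hmm]
    have hLdiff : L₁ - L₂ ≤ (s₂:ℝ)/((b-(s₂:ℝ))*(b+1)) := by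
      have hL₁eq : L₁ = Real.log b - Real.log (b - (s₂:ℝ)) := by
        rw [hL₁def, ← Real.log_div (ne_of_gt ha0) (ne_of_gt has1pos),
          ← Real.log_div (ne_of_gt hb0) (ne_of_gt hbs2pos)]
        congr 1
        rw [div_eq_div_iff (ne_of_gt has1pos) (ne_of_gt hbs2pos)]
        have hab' : a*(s₂:ℝ) = b*(s₁:ℝ) := by
          have hh : a*(s₂:ℝ)*S = b*(s₁:ℝ)*S := by
            rw [show a*(s₂:ℝ)*S = (a*S)*(s₂:ℝ) from by ring, haS,
              show b*(s₁:ℝ)*S = (b*S)*(s₁:ℝ) from by ring, hbS]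
            ring
          exact mul_right_cancel₀ hSne hh
        linear_combination (-1)*hab'
      rw [hL₁eq, hL₂def]
      have hX : 0 < b*(b+1-(s₂:ℝ)) := mul_pos hb0 hb1s2pos
      have hY : 0 < (b-(s₂:ℝ))*(b+1) := mul_pos hbs2pos hb1pos
      have h := Real.log_le_sub_one_of_pos (div_pos hX hY)
      rw [Real.log_div (ne_of_gt hX) (ne_of_gt hY), Real.log_mul (ne_of_gt hb0) (ne_of_gt hb1s2pos),
        Real.log_mul (ne_of_gt hbs2pos) (ne_of_gt hb1pos)] at h
      have he : b*(b+1-(s₂:ℝ))/((b-(s₂:ℝ))*(b+1)) - 1 = (s₂:ℝ)/((b-(s₂:ℝ))*(b+1)) := by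
        rw [div_sub_one (ne_of_gt hY)]
        rw [show b*(b+1-(s₂:ℝ)) - (b-(s₂:ℝ))*(b+1) = (s₂:ℝ) from by ring]
      rw [he] at h
      linarith only [h]
    have hB1 : (1999/1000)*(ε*S) ≤ (s₁:ℝ)*(u^2/(2*a*c)) := by
      have hden0 : (0:ℝ) < 2*a*c := by
        have := mul_pos ha0 hc0
        linarith only [this]
      rw [show (s₁:ℝ)*(u^2/(2*a*c)) = ((s₁:ℝ)*u^2)/(2*a*c) from by ring]
      rw [le_div_iff₀ hden0]
      have hu2 : 4*ε*(m:ℝ)^2 ≤ u^2 := by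
        have e : 4*ε*(m:ℝ)^2 = (2*q*(m:ℝ))^2 := by rw [← hq2]; ring
        rw [e]
        have h2qm : (0:ℝ) ≤ 2*q*(m:ℝ) := by linarith only [hqm0]
        nlinarith only [hu2qm, h2qm]
      have hs1u : 4*ε*(m:ℝ)*(a*S) ≤ (s₁:ℝ)*u^2 := by
        have e1 : 4*ε*(m:ℝ)*(a*S) = (s₁:ℝ)*(4*ε*(m:ℝ)^2) := by
          rw [haS]; ring
        rw [e1]
        exact mul_le_mul_of_nonneg_left hu2 hs₁nn
      have hc' := mul_le_mul_of_nonneg_left hc2049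
        (by positivity : (0:ℝ) ≤ (1999/500)*ε*S*a)
      nlinarith only [hs1u, hc', hε0, hS0, ha0, hm0R,
        mul_pos (mul_pos hε0 hS0) (mul_pos ha0 hm0R)]
    have hB2 : v*((s₂:ℝ)/((b-(s₂:ℝ))*(b+1))) ≤ (33/100)*((7/16)*v^2*((s₂:ℝ)/((b+1)*(b+1-(s₂:ℝ))))) := by
      have hK : v*(b+1-(s₂:ℝ)) ≤ (231/1600)*v^2*(b-(s₂:ℝ)) := by
        have h23 : b+1-(s₂:ℝ) ≤ (23/22)*(b-(s₂:ℝ)) := by linarith only [hbs₂]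
        have w1 := mul_le_mul_of_nonneg_left h23 hv0.le
        have w2 : (0:ℝ) ≤ ((231/1600)*v - 23/22)*(v*(b-(s₂:ℝ))) :=
          mul_nonneg (by linarith only [hv7]) (mul_nonneg hv0.le hbs2pos.le)
        nlinarith only [w1, w2]
      have e1 : v*((s₂:ℝ)/((b-(s₂:ℝ))*(b+1))) =
          (v*(b+1-(s₂:ℝ))) * ((s₂:ℝ)/((b-(s₂:ℝ))*(b+1)*(b+1-(s₂:ℝ)))) := by
        field_simp [ne_of_gt hbs2pos, ne_of_gt hb1pos, ne_of_gt hb1s2pos]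
      have e2 : (33/100)*((7/16)*v^2*((s₂:ℝ)/((b+1)*(b+1-(s₂:ℝ))))) =
          ((231/1600)*v^2*(b-(s₂:ℝ))) * ((s₂:ℝ)/((b-(s₂:ℝ))*(b+1)*(b+1-(s₂:ℝ)))) := by
        field_simp [ne_of_gt hbs2pos, ne_of_gt hb1pos, ne_of_gt hb1s2pos]
        ring
      rw [e1, e2]
      exact mul_le_mul_of_nonneg_right hK
        (div_nonneg hs₂nn (by positivity : (0:ℝ) ≤ (b-(s₂:ℝ))*(b+1)*(b+1-(s₂:ℝ))))
    have hB3 : (103/100)*(ε*S)*((m:ℝ)/((m:ℝ)-S)) ≤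
        (67/100)*((7/16)*v^2*((s₂:ℝ)/((b+1)*(b+1-(s₂:ℝ))))) := by
      have hv2 : (3969/1024)*ε*(m:ℝ)^2 ≤ v^2 := by
        have z1 : (63/32)*(q*(m:ℝ)) ≤ v := by linarith only [hvu, hu2qm]
        have e : (3969/1024)*ε*(m:ℝ)^2 = ((63/32)*(q*(m:ℝ)))^2 := by rw [← hq2]; ring
        rw [e]
        nlinarith only [z1, hqm0]
      have hbb : b*(b-(s₂:ℝ))*S^2 = (s₂:ℝ)^2*(m:ℝ)*((m:ℝ)-S) := by
        linear_combination (b*S + (s₂:ℝ)*(m:ℝ) - (s₂:ℝ)*S) * hbS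
      have hs₂S : (s₂:ℝ) ≤ S := by rw [hSdef]; linarith only [hs₁R]
      have h5' : S*(b*(b-(s₂:ℝ))) ≤ (s₂:ℝ)*((m:ℝ)*((m:ℝ)-S)) := by
        have h6 : S*(b*(b-(s₂:ℝ)))*S = (s₂:ℝ)^2*(m:ℝ)*((m:ℝ)-S) := by
          linear_combination hbb
        have w : (0:ℝ) ≤ (s₂:ℝ)*(m:ℝ)*((m:ℝ)-S) :=
          mul_nonneg (mul_nonneg hs₂nn hm0R.le) hmS0.le
        have h7 : (s₂:ℝ)^2*(m:ℝ)*((m:ℝ)-S) ≤ (s₂:ℝ)*((m:ℝ)*((m:ℝ)-S))*S := by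
          nlinarith only [hs₂S, w]
        have h8 : S*(b*(b-(s₂:ℝ)))*S ≤ ((s₂:ℝ)*((m:ℝ)*((m:ℝ)-S)))*S := by
          linarith only [h6, h7]
        exact le_of_mul_le_mul_right h8 hS0
      have hXb : (484/529)*(S*((m:ℝ)/((m:ℝ)-S))/(m:ℝ)^2) ≤ (s₂:ℝ)/((b+1)*(b+1-(s₂:ℝ))) := by
        have eL : (484/529)*(S*((m:ℝ)/((m:ℝ)-S))/(m:ℝ)^2) = (484*S)/(529*((m:ℝ)*((m:ℝ)-S))) := by
          field_simp
        rw [eL, div_le_div_iff₀ (by positivity : (0:ℝ) < 529*((m:ℝ)*((m:ℝ)-S))) (mul_pos hb1pos hb1s2pos)]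
        have ka : b+1 ≤ (23/22)*b := by linarith only [hbs₂, hs₂R]
        have kb : b+1-(s₂:ℝ) ≤ (23/22)*(b-(s₂:ℝ)) := by linarith only [hbs₂]
        have hden := mul_le_mul ka kb hb1s2pos.le
          (by linarith only [hb0] : (0:ℝ) ≤ (23/22)*b)
        have hden' := mul_le_mul_of_nonneg_left hden
          (by linarith only [hS0] : (0:ℝ) ≤ 484*S)
        nlinarith only [hden', h5']
      have hmul : ((3969/1024)*ε*(m:ℝ)^2) * ((484/529)*(S*((m:ℝ)/((m:ℝ)-S))/(m:ℝ)^2)) ≤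
          v^2 * ((s₂:ℝ)/((b+1)*(b+1-(s₂:ℝ)))) := by
        apply mul_le_mul hv2 hXb _ (sq_nonneg v)
        have w : (0:ℝ) ≤ S*((m:ℝ)/((m:ℝ)-S))/(m:ℝ)^2 :=
          div_nonneg (mul_nonneg hS0.le hRpos.le) (sq_nonneg _)
        linarith only [w]
      have heq : ((3969/1024)*ε*(m:ℝ)^2) * ((484/529)*(S*((m:ℝ)/((m:ℝ)-S))/(m:ℝ)^2)) =
          (1920996/541696)*((ε*S)*((m:ℝ)/((m:ℝ)-S))) := by
        field_simp
        ring
      rw [heq] at hmul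
      have hnn : (0:ℝ) ≤ (ε*S)*((m:ℝ)/((m:ℝ)-S)) :=
        mul_nonneg (mul_nonneg hε0.le hS0.le) hRpos.le
      linarith only [hmul, hnn]
    -- assemble core
    have hεSR : ε*S ≤ ε*S*((m:ℝ)/((m:ℝ)-S)) := by
      have w := mul_le_mul_of_nonneg_left hR1 (mul_nonneg hε0.le hS0.le)
      linarith only [w]
    have hCORE : u*L₁ - v*L₂ - (s₁:ℝ)*(u^2/(2*a*c)) - (7/16)*v^2*T ≤ -(ε*S) := by
      have h1' : (u-v)*L₁ ≤ 2*ε*(m:ℝ)*L₁ := mul_le_mul_of_nonneg_right huv hL₁0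
      have h2' : v*(L₁-L₂) ≤ v*((s₂:ℝ)/((b-(s₂:ℝ))*(b+1))) :=
        mul_le_mul_of_nonneg_left hLdiff hv0.le
      have hsplit : u*L₁ - v*L₂ = (u-v)*L₁ + v*(L₁ - L₂) := by ring
      rw [hT']
      linarith only [hB1, hB2, hB3, hL₁up, hεSR, h1', h2', hsplit, mul_pos hε0 hS0]
    -- final combination
    have hu_sumInv : u * (∑ i ∈ Finset.range s₁, 1/(a - (i:ℝ))) ≤ u * L₁ :=
      mul_le_mul_of_nonneg_left hsumInv1 hu0.le
    have hv_sumInv : v * L₂ ≤ v * (∑ j ∈ Finset.range s₂, 1/(b - (j:ℝ))) :=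
      mul_le_mul_of_nonneg_left hsumInv2 hv0.le
    linarith only [hsum1, hsum2, hu_sumInv, hv_sumInv, hCORE]
  -- conclude from key
  have hD : (0:ℝ) < (Nat.factorial s₁ : ℝ) * (Nat.factorial s₂ : ℝ) := mul_pos hf₁ hf₂
  calc (∏ i ∈ Finset.range s₁, (c - (i:ℝ)))/(Nat.factorial s₁ : ℝ) *
        ((∏ j ∈ Finset.range s₂, (d - (j:ℝ)))/(Nat.factorial s₂ : ℝ))
      = (∏ i ∈ Finset.range s₁, (c - (i:ℝ))) * (∏ j ∈ Finset.range s₂, (d - (j:ℝ))) /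
          ((Nat.factorial s₁ : ℝ) * (Nat.factorial s₂ : ℝ)) := by ring
    _ ≤ Real.exp (-(ε*S)) * ((∏ i ∈ Finset.range s₁, (a - (i:ℝ))) * (∏ j ∈ Finset.range s₂, (b - (j:ℝ)))) /
          ((Nat.factorial s₁ : ℝ) * (Nat.factorial s₂ : ℝ)) := (div_le_div_iff_of_pos_right hD).mpr key
    _ = Real.exp (-(ε*S)) * ((∏ i ∈ Finset.range s₁, (a - (i:ℝ)))/(Nat.factorial s₁ : ℝ)) *
          ((∏ j ∈ Finset.range s₂, (b - (j:ℝ)))/(Nat.factorial s₂ : ℝ)) := by ring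
end
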